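/- Let S define a partial assignment and suppose CNF formulas (θ, θ', χ) form an optimal output of the counterfactual difference problem with input (S, φ, ψ) (S ≡ θ ∧ χ ⊨ φ ∧ ¬ψ, θ' ∧ χ ⊨ ¬φ ∧ ψ, θ' ∧ χ satisfiable iff S satisfiable, total size minimal). Then θ' ∧ χ is logically equivalent to some partial assignment (consistent conjunction of literals). -/

import Mathlib

inductive PLF (V : Type) : Type
  | bot  : PLF V
  | var  : V → PLF V
  | neg  : PLF V → PLF V
  | and  : PLF V → PLF V → PLF V
  | or   : PLF V → PLF V → PLF V

namespace PLF
variable {V : Type}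
def eval (s : V → Bool) : PLF V → Bool
  | bot => false
  | var v => s v
  | neg φ => !(eval s φ)
  | and φ ψ => eval s φ && eval s ψ
  | or φ ψ => eval s φ || eval s ψ
end PLF

inductive Lit (V : Type) : Type
  | pos : V → Lit V
  | neg : V → Lit V

namespace Lit
variable {V : Type}
def eval (s : V → Bool) : Lit V → Bool
  | pos v => s v
  | neg v => !(s v)
def compl : Lit V → Lit V
  | pos v => neg v
  | neg v => pos v
def var : Lit V → V
  | pos v => v
  | neg v => v
end Lit

abbrev Clause (V : Type) := List (Lit V)
abbrev CNF (V : Type) := List (Clause V)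

def Clause.ceval {V : Type} (s : V → Bool) (C : Clause V) : Bool := C.any (Lit.eval s)
def CNF.feval {V : Type} (s : V → Bool) (F : CNF V) : Bool := F.all (Clause.ceval s)
def CNF.size {V : Type} (F : CNF V) : Nat := (F.map List.length).sum
def Term.teval {V : Type} (s : V → Bool) (t : List (Lit V)) : Bool := t.all (Lit.eval s)


/-!
Write `A` for `θ' ∧ χ` and `t` for the consistent term equivalent to `S`. It suffices to show that
every clause `C` of `θ'` or `χ` contains a literal entailed by `A`: then `A` is equivalent to the
conjunction of the literals it entails. Each case is a local surgery on `(θ, θ', χ)` that keeps it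
an output, so optimality bounds `|C|`:
* `C ∈ θ'`: shrink `C` to a literal true in a model of `A`; hence `|C| ≤ 1`.
* `C ∈ χ` valid: delete it; hence `|C| = 0`, impossible.
* `C ∈ χ` otherwise: since `t ⊨ C` and `C` is not valid, `t ⊨ l₁` for some `l₁ ∈ C`. If `A ∧ l₁`
  is satisfiable, shrink `C` to `l₁`, so `|C| ≤ 1`. Otherwise move `l₁` to `θ` and a literal
  `l ∈ C` true in a model of `A` to `θ'`, so `|C| ≤ 2`, and then `C = l ∨ l₁` with `A ⊨ ¬l₁`.
-/

theorem List.eq_of_mem_of_length_le_one {α : Type*} {l : List α} (h : l.length ≤ 1) {x y : α}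
    (hx : x ∈ l) (hy : y ∈ l) : x = y := by
  match l, h with
  | [a], _ => simp_all

theorem List.eq_or_eq_of_length_le_two {α : Type*} {l : List α} (h : l.length ≤ 2) {x y z : α}
    (hx : x ∈ l) (hy : y ∈ l) (hxy : x ≠ y) (hz : z ∈ l) : z = x ∨ z = y := by
  match l, h with
  | [a], _ => simp_all
  | [a, b], _ => simp only [List.mem_cons, List.not_mem_nil, or_false] at hx hy hz; grind

variable {V : Type}

namespace Clause

@[simp]
theorem ceval_nil (s : V → Bool) : Clause.ceval s ([] : Clause V) = false := rfl

@[simp]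
theorem ceval_singleton (s : V → Bool) (l : Lit V) : Clause.ceval s [l] = l.eval s := by
  simp [ceval]

theorem ceval_eq_true {s : V → Bool} {C : Clause V} :
    C.ceval s = true ↔ ∃ l ∈ C, l.eval s = true := by
  simp [ceval]

theorem ceval_of_mem {s : V → Bool} {C : Clause V} {l : Lit V} (hl : l ∈ C)
    (hs : l.eval s = true) : C.ceval s = true :=
  ceval_eq_true.mpr ⟨l, hl, hs⟩

theorem ceval_of_pos_mem_of_neg_mem {C : Clause V} {v : V} (hp : Lit.pos v ∈ C)
    (hn : Lit.neg v ∈ C) (s : V → Bool) : C.ceval s = true := by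
  cases hv : s v
  · exact ceval_of_mem hn (by simp [Lit.eval, hv])
  · exact ceval_of_mem hp (by simp [Lit.eval, hv])

theorem eval_of_ceval {s : V → Bool} {C : Clause V} {l : Lit V} (hC : C.ceval s = true)
    (hl : ∀ m ∈ C, m.eval s = true → m = l) : l.eval s = true := by
  obtain ⟨m, hm, hms⟩ := ceval_eq_true.mp hC
  exact hl m hm hms ▸ hms

open Classical in
noncomputable def falsifier (C : Clause V) (s : V → Bool) (v : V) : Bool :=
  if Lit.pos v ∈ C then false else if Lit.neg v ∈ C then true else s v

theorem ceval_falsifier {C : Clause V} (hC : ∀ v, Lit.pos v ∈ C → Lit.neg v ∉ C)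
    (s : V → Bool) : C.ceval (falsifier C s) = false := by
  refine Bool.eq_false_iff.mpr fun h => ?_
  obtain ⟨l, hl, hls⟩ := ceval_eq_true.mp h
  cases l with
  | pos v => simp [Lit.eval, falsifier, hl] at hls
  | neg v => simp [Lit.eval, falsifier, hl, mt (hC v) (not_not.mpr hl)] at hls

theorem eval_falsifier {C : Clause V} {s : V → Bool} {l : Lit V} (hl : l ∉ C)
    (hs : l.eval s = true) : l.eval (falsifier C s) = true := by
  cases l with
  | pos v => by_cases hn : Lit.neg v ∈ C <;> simp_all [Lit.eval, falsifier]
  | neg v => by_cases hp : Lit.pos v ∈ C <;> simp_all [Lit.eval, falsifier]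

end Clause

namespace Term

theorem teval_eq_true {s : V → Bool} {t : List (Lit V)} :
    Term.teval s t = true ↔ ∀ l ∈ t, l.eval s = true := by
  simp [teval]

theorem exists_mem_of_entails {t : List (Lit V)} {C : Clause V} (ht : ∃ s, Term.teval s t = true)
    (hC : ∀ v, Lit.pos v ∈ C → Lit.neg v ∉ C) (hent : ∀ s, Term.teval s t = true → C.ceval s = true) :
    ∃ l ∈ C, l ∈ t := by
  by_contra! hdisj
  obtain ⟨s, hs⟩ := ht
  have hfals : Term.teval (Clause.falsifier C s) t = true := teval_eq_true.mpr fun l hl =>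
    Clause.eval_falsifier (fun hlC => hdisj l hlC hl) (teval_eq_true.mp hs l hl)
  simpa [Clause.ceval_falsifier hC] using hent _ hfals

end Term

namespace CNF

theorem feval_eq_true {s : V → Bool} {F : CNF V} :
    F.feval s = true ↔ ∀ C ∈ F, C.ceval s = true := by
  simp [feval]

@[simp]
theorem feval_nil (s : V → Bool) : CNF.feval s ([] : CNF V) = true := rfl

@[simp]
theorem feval_cons (s : V → Bool) (C : Clause V) (F : CNF V) :
    CNF.feval s (C :: F) = (C.ceval s && F.feval s) := rfl

@[simp]
theorem feval_append (s : V → Bool) (F G : CNF V) :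
    CNF.feval s (F ++ G) = (F.feval s && G.feval s) := by
  simp [feval]

theorem ceval_of_mem {s : V → Bool} {F : CNF V} {C : Clause V} (hF : F.feval s = true)
    (hC : C ∈ F) : C.ceval s = true :=
  feval_eq_true.mp hF C hC

@[simp]
theorem size_nil : CNF.size ([] : CNF V) = 0 := rfl

@[simp]
theorem size_cons (C : Clause V) (F : CNF V) : CNF.size (C :: F) = C.length + F.size := by
  simp [size]

@[simp]
theorem size_append (F G : CNF V) : CNF.size (F ++ G) = F.size + G.size := by
  simp [size]

theorem exists_term_eq_of_forall_exists_entailed {F : CNF V}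
    (h : ∀ C ∈ F, ∃ l ∈ C, ∀ s, F.feval s = true → l.eval s = true) :
    ∃ t : List (Lit V), ∀ s, F.feval s = Term.teval s t := by
  classical
  refine ⟨F.flatten.filter fun l => ∀ s, F.feval s = true → l.eval s = true, fun s => ?_⟩
  rw [Bool.eq_iff_iff, Term.teval_eq_true, feval_eq_true]
  simp only [List.mem_filter, List.mem_flatten, decide_eq_true_eq]
  refine ⟨fun hs l ⟨_, hl⟩ => hl s (feval_eq_true.mpr hs), fun ht C hC => ?_⟩
  obtain ⟨l, hl, hls⟩ := h C hC
  exact Clause.ceval_of_mem hl (ht l ⟨⟨C, hC, hl⟩, hls⟩)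

end CNF

/-- `(θ, θ', χ)` is an output of the counterfactual difference problem whose input `S` has the
models `M`, with `P = φ ∧ ¬ψ` and `Q = ¬φ ∧ ψ`. -/
structure IsCFDOutput (M P Q : (V → Bool) → Prop) (θ θ' χ : CNF V) : Prop where
  models_iff : ∀ s, M s ↔ (θ.feval s && χ.feval s) = true
  entails_left : ∀ s, (θ.feval s && χ.feval s) = true → P s
  entails_right : ∀ s, (θ'.feval s && χ.feval s) = true → Q s
  sat_iff : (∃ s, (θ'.feval s && χ.feval s) = true) ↔ ∃ s, M s

structure IsOptimalCFDOutput (M P Q : (V → Bool) → Prop) (θ θ' χ : CNF V) : Prop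
    extends IsCFDOutput M P Q θ θ' χ where
  size_le : ∀ θ₂ θ'₂ χ₂ : CNF V, IsCFDOutput M P Q θ₂ θ'₂ χ₂ →
    θ.size + θ'.size + χ.size ≤ θ₂.size + θ'₂.size + χ₂.size

namespace IsOptimalCFDOutput

variable {M P Q : (V → Bool) → Prop} {θ θ' χ : CNF V} {C : Clause V}

theorem size_le_of_refine (h : IsOptimalCFDOutput M P Q θ θ' χ) {θ₂ θ'₂ χ₂ : CNF V}
    (heq : ∀ s, (θ₂.feval s && χ₂.feval s) = (θ.feval s && χ.feval s))
    (hent : ∀ s, (θ'₂.feval s && χ₂.feval s) = true → (θ'.feval s && χ.feval s) = true)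
    (hsat : ∃ s, (θ'₂.feval s && χ₂.feval s) = true) :
    θ.size + θ'.size + χ.size ≤ θ₂.size + θ'₂.size + χ₂.size := by
  refine h.size_le θ₂ θ'₂ χ₂ ⟨fun s => heq s ▸ h.models_iff s, fun s hs => h.entails_left s
    (heq s ▸ hs), fun s hs => h.entails_right s (hent s hs), ⟨fun _ => ?_, fun _ => hsat⟩⟩
  obtain ⟨s, hs⟩ := hsat
  exact h.sat_iff.mp ⟨s, hent s hs⟩

theorem exists_entailed_of_mem_right (h : IsOptimalCFDOutput M P Q θ θ' χ)
    (hsat : ∃ s, (θ'.feval s && χ.feval s) = true) (hC : C ∈ θ') :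
    ∃ l ∈ C, ∀ s, (θ'.feval s && χ.feval s) = true → l.eval s = true := by
  obtain ⟨sA, hsA⟩ := hsat
  rw [Bool.and_eq_true] at hsA
  obtain ⟨l, hl, hlA⟩ := Clause.ceval_eq_true.mp (CNF.ceval_of_mem hsA.1 hC)
  obtain ⟨pre, post, rfl⟩ := List.append_of_mem hC
  have hsize := h.size_le_of_refine (θ₂ := θ) (θ'₂ := pre ++ [l] :: post) (χ₂ := χ)
    (fun _ => rfl) (fun s hs => ?_) ⟨sA, by simp_all⟩
  · refine ⟨l, hl, fun s hs => Clause.eval_of_ceval (CNF.ceval_of_mem ?_ hC) fun m hm _ =>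
      List.eq_of_mem_of_length_le_one ?_ hm hl⟩
    · exact (Bool.and_eq_true _ _ ▸ hs).1
    · simp only [CNF.size_append, CNF.size_cons, List.length_singleton] at hsize
      omega
  · simp only [CNF.feval_append, CNF.feval_cons, Clause.ceval_singleton, Bool.and_eq_true] at hs ⊢
    exact ⟨⟨hs.1.1, Clause.ceval_of_mem hl hs.1.2.1, hs.1.2.2⟩, hs.2⟩

theorem not_forall_ceval_of_mem_common (h : IsOptimalCFDOutput M P Q θ θ' χ)
    (hsat : ∃ s, (θ'.feval s && χ.feval s) = true) (hC : C ∈ χ) :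
    ¬ ∀ s, C.ceval s = true := by
  intro hvalid
  obtain ⟨pre, post, rfl⟩ := List.append_of_mem hC
  have hdel : ∀ s, CNF.feval s (pre ++ post) = CNF.feval s (pre ++ C :: post) := by
    simp [hvalid]
  have hsize := h.size_le_of_refine (θ₂ := θ) (θ'₂ := θ') (χ₂ := pre ++ post)
    (fun s => by rw [hdel]) (fun s hs => by rwa [hdel] at hs) (by simpa only [hdel] using hsat)
  have hnil : C = [] := List.eq_nil_of_length_eq_zero (by simp only [CNF.size_append, CNF.size_cons] at hsize; omega)
  simpa [hnil] using hvalid fun _ => false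

theorem entails_of_mem_common_of_sat (h : IsOptimalCFDOutput M P Q θ θ' χ) {l₁ : Lit V}
    (hC : C ∈ χ) (hl₁ : l₁ ∈ C) (hent : ∀ s, (θ.feval s && χ.feval s) = true → l₁.eval s = true)
    (hsat : ∃ s, (θ'.feval s && χ.feval s) = true ∧ l₁.eval s = true) :
    ∀ s, (θ'.feval s && χ.feval s) = true → l₁.eval s = true := by
  obtain ⟨pre, post, rfl⟩ := List.append_of_mem hC
  have hshrink : ∀ s, CNF.feval s (pre ++ [l₁] :: post) = true →
      CNF.feval s (pre ++ C :: post) = true := by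
    intro s hs
    simp only [CNF.feval_append, CNF.feval_cons, Clause.ceval_singleton, Bool.and_eq_true] at hs ⊢
    exact ⟨hs.1, Clause.ceval_of_mem hl₁ hs.2.1, hs.2.2⟩
  have hsize := h.size_le_of_refine (θ₂ := θ) (θ'₂ := θ') (χ₂ := pre ++ [l₁] :: post)
    (fun s => Bool.eq_iff_iff.mpr ?_) (fun s hs => ?_) ?_
  · intro s hs
    refine Clause.eval_of_ceval (CNF.ceval_of_mem (Bool.and_eq_true _ _ ▸ hs).2 hC)
      fun m hm _ => List.eq_of_mem_of_length_le_one ?_ hm hl₁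
    simp only [CNF.size_append, CNF.size_cons, List.length_singleton] at hsize
    omega
  · simp only [Bool.and_eq_true]
    refine ⟨fun hs => ⟨hs.1, hshrink s hs.2⟩, fun hs => ⟨hs.1, ?_⟩⟩
    have hl₁s := hent s (by simpa using hs)
    simp_all
  · rw [Bool.and_eq_true] at hs ⊢
    exact ⟨hs.1, hshrink s hs.2⟩
  · obtain ⟨s, hs, hl₁s⟩ := hsat
    exact ⟨s, by simp_all⟩

theorem exists_entailed_of_mem_common_of_unsat (h : IsOptimalCFDOutput M P Q θ θ' χ)
    {l₁ : Lit V} (hC : C ∈ χ) (hl₁ : l₁ ∈ C)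
    (hent : ∀ s, (θ.feval s && χ.feval s) = true → l₁.eval s = true)
    (hunsat : ∀ s, (θ'.feval s && χ.feval s) = true → l₁.eval s = false)
    (hsat : ∃ s, (θ'.feval s && χ.feval s) = true) :
    ∃ l ∈ C, ∀ s, (θ'.feval s && χ.feval s) = true → l.eval s = true := by
  obtain ⟨sA, hsA⟩ := hsat
  obtain ⟨l, hl, hlA⟩ := Clause.ceval_eq_true.mp
    (CNF.ceval_of_mem (Bool.and_eq_true _ _ ▸ hsA).2 hC)
  have hne : l ≠ l₁ := by
    rintro rfl
    simp [hunsat sA hsA] at hlA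
  obtain ⟨pre, post, rfl⟩ := List.append_of_mem hC
  have hsize := h.size_le_of_refine (θ₂ := θ ++ [[l₁]]) (θ'₂ := θ' ++ [[l]])
    (χ₂ := pre ++ post) (fun s => Bool.eq_iff_iff.mpr ?_) (fun s hs => ?_) ⟨sA, by simp_all⟩
  · refine ⟨l, hl, fun s hs => Clause.eval_of_ceval
      (CNF.ceval_of_mem (Bool.and_eq_true _ _ ▸ hs).2 hC) fun m hm hms => ?_⟩
    have hlen : C.length ≤ 2 := by
      simp only [CNF.size_append, CNF.size_cons, CNF.size_nil, List.length_singleton] at hsize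
      omega
    refine (List.eq_or_eq_of_length_le_two hlen hl hl₁ hne hm).resolve_right ?_
    rintro rfl
    simp [hunsat s hs] at hms
  · simp only [CNF.feval_append, CNF.feval_cons, CNF.feval_nil, Clause.ceval_singleton,
      Bool.and_true, Bool.and_eq_true]
    refine ⟨fun hs => ⟨hs.1.1, hs.2.1, Clause.ceval_of_mem hl₁ hs.1.2, hs.2.2⟩,
      fun hs => ⟨⟨hs.1, ?_⟩, hs.2.1, hs.2.2.2⟩⟩
    exact hent s (by simpa using hs)
  · simp only [CNF.feval_append, CNF.feval_cons, CNF.feval_nil, Clause.ceval_singleton,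
      Bool.and_true, Bool.and_eq_true] at hs ⊢
    exact ⟨hs.1.1, hs.2.1, Clause.ceval_of_mem hl hs.1.2, hs.2.2⟩

theorem exists_entailed_of_mem_common (h : IsOptimalCFDOutput M P Q θ θ' χ) {t : List (Lit V)}
    (ht : ∀ s, M s ↔ Term.teval s t = true) (htsat : ∃ s, Term.teval s t = true) (hC : C ∈ χ) :
    ∃ l ∈ C, ∀ s, (θ'.feval s && χ.feval s) = true → l.eval s = true := by
  have hsat := h.sat_iff.mpr (htsat.imp fun s hs => (ht s).mpr hs)
  have hvalid := h.not_forall_ceval_of_mem_common hsat hC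
  have hmodels : ∀ s, Term.teval s t = true ↔ (θ.feval s && χ.feval s) = true :=
    fun s => (ht s).symm.trans (h.models_iff s)
  obtain ⟨l₁, hl₁, hl₁t⟩ := Term.exists_mem_of_entails htsat
    (fun v hp hn => hvalid (Clause.ceval_of_pos_mem_of_neg_mem hp hn))
    (fun s hs => CNF.ceval_of_mem (Bool.and_eq_true _ _ ▸ (hmodels s).mp hs).2 hC)
  have hent : ∀ s, (θ.feval s && χ.feval s) = true → l₁.eval s = true :=
    fun s hs => Term.teval_eq_true.mp ((hmodels s).mpr hs) l₁ hl₁t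
  by_cases hl₁sat : ∃ s, (θ'.feval s && χ.feval s) = true ∧ l₁.eval s = true
  · exact ⟨l₁, hl₁, h.entails_of_mem_common_of_sat hC hl₁ hent hl₁sat⟩
  · push Not at hl₁sat
    exact h.exists_entailed_of_mem_common_of_unsat hC hl₁ hent (by simpa using hl₁sat) hsat

theorem exists_term_eq (h : IsOptimalCFDOutput M P Q θ θ' χ) {t : List (Lit V)}
    (ht : ∀ s, M s ↔ Term.teval s t = true) (htsat : ∃ s, Term.teval s t = true) :
    ∃ t' : List (Lit V), (∃ s, Term.teval s t' = true) ∧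
      ∀ s, (θ'.feval s && χ.feval s) = Term.teval s t' := by
  have hsat := h.sat_iff.mpr (htsat.imp fun s hs => (ht s).mpr hs)
  obtain ⟨t', ht'⟩ := CNF.exists_term_eq_of_forall_exists_entailed (F := θ' ++ χ) fun C hC => by
    simp only [CNF.feval_append]
    rcases List.mem_append.mp hC with hC | hC
    exacts [h.exists_entailed_of_mem_right hsat hC, h.exists_entailed_of_mem_common ht htsat hC]
  simp only [CNF.feval_append] at ht'
  obtain ⟨s, hs⟩ := hsat
  exact ⟨t', ⟨s, ht' s ▸ hs⟩, ht'⟩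

end IsOptimalCFDOutput

theorem stmt8 {V : Type} (S : Finset (PLF V)) (φ ψ : PLF V) (θ θ' χ : CNF V)
    (hdef : ∃ t : List (Lit V), (∃ s, Term.teval s t = true) ∧
      ∀ s, (∀ σ ∈ S, σ.eval s = true) ↔ Term.teval s t = true)
    (heqv : ∀ s, (∀ σ ∈ S, σ.eval s = true) ↔ (θ.feval s && χ.feval s) = true)
    (hφ : ∀ s, (θ.feval s && χ.feval s) = true → (φ.and ψ.neg).eval s = true)
    (hψ : ∀ s, (θ'.feval s && χ.feval s) = true → (φ.neg.and ψ).eval s = true)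
    (hsat : (∃ s, (θ'.feval s && χ.feval s) = true) ↔ (∃ s, ∀ σ ∈ S, σ.eval s = true))
    (hmin : ∀ θ₂ θ'₂ χ₂ : CNF V,
      (∀ s, (∀ σ ∈ S, σ.eval s = true) ↔ (θ₂.feval s && χ₂.feval s) = true) →
      (∀ s, (θ₂.feval s && χ₂.feval s) = true → (φ.and ψ.neg).eval s = true) →
      (∀ s, (θ'₂.feval s && χ₂.feval s) = true → (φ.neg.and ψ).eval s = true) →
      ((∃ s, (θ'₂.feval s && χ₂.feval s) = true) ↔ (∃ s, ∀ σ ∈ S, σ.eval s = true)) →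
      θ.size + θ'.size + χ.size ≤ θ₂.size + θ'₂.size + χ₂.size) :
    ∃ t : List (Lit V), (∃ s, Term.teval s t = true) ∧
      ∀ s, (θ'.feval s && χ.feval s) = Term.teval s t := by
  obtain ⟨t, htsat, ht⟩ := hdef
  have hopt : IsOptimalCFDOutput (fun s => ∀ σ ∈ S, σ.eval s = true)
      (fun s => (φ.and ψ.neg).eval s = true) (fun s => (φ.neg.and ψ).eval s = true) θ θ' χ :=
    ⟨⟨heqv, hφ, hψ, hsat⟩, fun θ₂ θ'₂ χ₂ h₂ => hmin θ₂ θ'₂ χ₂ h₂.1 h₂.2 h₂.3 h₂.4⟩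
  exact hopt.exists_term_eq ht htsat
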